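/- arXiv:1908.03659 — 5 statements merged into one kernel-verified Lean document; each statement's English description precedes it below -/
import Mathlib

section
/- Let $G$ be a connected graph, $P$ a longest path of $G$ with endpoint $a$, and $\operatorname{END}(P,a)$ the set of vertices $x$ such that some path obtained from $P$ by a sequence of Pósa rotations (keeping $a$ fixed as an endpoint) has $x$ as its other endpoint. Then $|N(\operatorname{END}(P,a))| < 2|\operatorname{END}(P,a)|$. -/
open SimpleGraph

variable {V : Type*} [Fintype V]

/-- A (nonempty) path in `G`, represented as the list of its vertices. -/
def IsPathList (G : SimpleGraph V) (L : List V) : Prop :=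
  L ≠ [] ∧ L.Chain' G.Adj ∧ L.Nodup

/-- A Pósa rotation: if `L = x₀ … x_t` is a path and `x_t x_i ∈ E(G)`, the rotated
path is `L' = x₀ … x_i x_t x_{t-1} … x_{i+1}`.  Writing `L = P ++ v :: S` with
`v = x_i`, the rotation at the edge from the last vertex of `S` (namely `x_t`)
to `v` produces `L' = P ++ v :: S.reverse`. -/
def Rotation (G : SimpleGraph V) (L L' : List V) : Prop :=
  ∃ (P S : List V) (v : V) (hS : S ≠ []),
    L = P ++ v :: S ∧ L' = P ++ v :: S.reverse ∧ G.Adj (S.getLast hS) v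

/-- `ENDSet G L`: the set of vertices `x` that occur as the non-fixed endpoint of
some path obtained from `L` by a sequence of Pósa rotations (the first vertex of
`L` stays fixed throughout). -/
def ENDSet (G : SimpleGraph V) (L : List V) : Set V :=
  {x | ∃ L', Relation.ReflTransGen (Rotation G) L L' ∧ L'.getLast? = some x}

/-- The external neighborhood `N(X)`. -/
def extN (G : SimpleGraph V) (X : Set V) : Set V :=
  {u | u ∉ X ∧ ∃ x ∈ X, G.Adj x u}

/-! Pósa's argument. A rotation of `P ++ v :: s :: S` only breaks the edge `vs`, and `s`
becomes the new endpoint; so an edge of `L` with no end in `END(L)` survives, up to orientation,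
in every rotated path. Let `u ∉ END(L)` be adjacent to the endpoint `x` of a rotated path `L₁`.
As `L` is longest, `u` lies on `L₁`, and rotating `L₁` at `xu` puts the successor of `u` on `L₁`
into `END(L)`. If no neighbour of `u` on `L` were in `END(L)`, they would all be predecessors of
`u` on `L₁`: impossible if `u` has two of them, or if `u` is the first vertex. Hence `N(END(L))`
consists of predecessors and successors on `L` of vertices of `END(L)`, and the last vertex of
`L` has no successor. -/
theorem Set.ncard_le_ncard_of_exists_rel {α β : Type*} {r : α → β → Prop} {s : Set α}
    {t : Set β} (ht : t.Finite) (hs : ∀ a ∈ s, ∃ b ∈ t, r a b)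
    (hr : ∀ a a' b, r a b → r a' b → a = a') : s.ncard ≤ t.ncard := by
  have : ∀ a : s, ∃ b : t, r a b := fun a ↦
    let ⟨b, hb, hab⟩ := hs a a.2
    ⟨⟨b, hb⟩, hab⟩
  choose f hf using this
  have := ht.to_subtype
  exact Nat.card_le_card_of_injective f fun a a' h ↦
    Subtype.ext (hr _ _ _ (hf a) (h ▸ hf a'))

namespace List

variable {α : Type*} {L : List α} {u w x x' y y' z : α}

theorem pair_infix_iff : [x, y] <:+: L ↔ ∃ A B, L = A ++ x :: y :: B := by
  constructor <;> rintro ⟨A, B, rfl⟩ <;> exact ⟨A, B, by simp⟩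

theorem pair_infix_append_iff {l₁ l₂ : List α} :
    [x, y] <:+: l₁ ++ l₂ ↔
      [x, y] <:+: l₁ ∨ [x, y] <:+: l₂ ∨ (l₁.getLast? = some x ∧ l₂.head? = some y) := by
  rw [infix_append_iff, singleton_suffix_iff_getLast?_eq_some.symm,
    singleton_prefix_iff_head?_eq_some.symm]
  constructor
  · rintro (h | h | ⟨_ | ⟨a, _ | ⟨b, _ | ⟨c, l⟩⟩⟩, l', h, h₁, h₂⟩)
    · exact Or.inl h
    · exact Or.inr (Or.inl h)
    · subst h
      exact Or.inr (Or.inl h₂.isInfix)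
    · simp only [cons_append, nil_append, cons.injEq] at h
      obtain ⟨rfl, rfl⟩ := h
      exact Or.inr (Or.inr ⟨h₁, h₂⟩)
    · simp only [cons_append, nil_append, cons.injEq] at h
      obtain ⟨rfl, rfl, -, rfl⟩ := h
      exact Or.inl h₁.isInfix
    · simp at h
  · rintro (h | h | ⟨h₁, h₂⟩)
    · exact Or.inl h
    · exact Or.inr (Or.inl h)
    · exact Or.inr (Or.inr ⟨[x], [y], rfl, h₁, h₂⟩)

theorem Nodup.eq_of_pair_infix_left (hL : L.Nodup) (h : [x, y] <:+: L) (h' : [x, y'] <:+: L) :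
    y = y' := by
  obtain ⟨A, B, rfl⟩ := pair_infix_iff.1 h
  obtain ⟨A', B', h'⟩ := pair_infix_iff.1 h'
  have hx := nodup_middle.1 hL
  rw [nodup_cons, mem_append, not_or] at hx
  have := (append_cons_inj_of_notMem hx.1.1 hx.1.2).1 h'
  exact (cons_eq_cons.1 this.2.2).1

theorem Nodup.eq_of_pair_infix_right (hL : L.Nodup) (h : [x, y] <:+: L) (h' : [x', y] <:+: L) :
    x = x' :=
  (nodup_reverse.2 hL).eq_of_pair_infix_left (reverse_infix.2 h) (reverse_infix.2 h')

theorem Nodup.head?_ne_of_pair_infix (hL : L.Nodup) (h : [x, y] <:+: L) : L.head? ≠ some y := by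
  intro hy
  obtain ⟨T, rfl⟩ : ∃ T, L = y :: T := ⟨L.tail, (cons_head?_tail hy).symm⟩
  rcases infix_cons_iff.1 h with h | h
  · obtain ⟨rfl, h⟩ := cons_prefix_cons.1 h
    exact (nodup_cons.1 hL).1 (h.subset (mem_singleton_self _))
  · exact (nodup_cons.1 hL).1 (h.subset (by simp))

theorem Nodup.getLast?_ne_of_pair_infix (hL : L.Nodup) (h : [x, y] <:+: L) :
    L.getLast? ≠ some x := by
  rw [← head?_reverse]
  exact (nodup_reverse.2 hL).head?_ne_of_pair_infix (reverse_infix.2 h)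

theorem exists_pair_infix_of_mem (hu : u ∈ L) (hl : L.getLast? ≠ some u) :
    ∃ t, [u, t] <:+: L := by
  obtain ⟨A, _ | ⟨t, B⟩, rfl⟩ := append_of_mem hu
  · simp at hl
  · exact ⟨t, pair_infix_iff.2 ⟨A, B, rfl⟩⟩

theorem exists_triple_infix_of_mem (hu : u ∈ L) (hh : L.head? ≠ some u)
    (hl : L.getLast? ≠ some u) : ∃ w t, [w, u, t] <:+: L := by
  obtain ⟨t, A, B, rfl⟩ := exists_pair_infix_of_mem hu hl
  obtain rfl | ⟨A, w, rfl⟩ := eq_nil_or_concat A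
  · simp at hh
  · exact ⟨w, t, A, B, by simp⟩

def consecutiveGraph (L : List α) : SimpleGraph α := fromRel fun x y ↦ [x, y] <:+: L

theorem Nodup.pair_infix_of_consecutiveGraph_adj (hL : L.Nodup)
    (h : L.consecutiveGraph.Adj w u) (hx : [u, x] <:+: L) (hw : w ≠ x) : [w, u] <:+: L :=
  ((fromRel_adj _ _ _).1 h).2.resolve_right fun h ↦ hw (hL.eq_of_pair_infix_left h hx)

theorem Nodup.consecutiveGraph_adj_of_pair_infix (hL : L.Nodup) (h : [x, y] <:+: L) :
    L.consecutiveGraph.Adj x y :=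
  (fromRel_adj _ _ _).2 ⟨by simpa using hL.sublist h.sublist, Or.inl h⟩

theorem Nodup.ncard_extN_consecutiveGraph_lt (hL : L.Nodup) {X : Set α} (hX : X.Finite)
    (hz : z ∈ X) (hlast : L.getLast? = some z) :
    (extN L.consecutiveGraph X).ncard < 2 * X.ncard := by
  set A := {u | ∃ w ∈ X, [w, u] <:+: L}
  set B := {u | ∃ w ∈ X, [u, w] <:+: L}
  have hsub : extN L.consecutiveGraph X ⊆ A ∪ B := by
    rintro u ⟨-, w, hw, hwu⟩
    rcases ((fromRel_adj _ _ _).1 hwu).2 with h | h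
    exacts [Or.inl ⟨w, hw, h⟩, Or.inr ⟨w, hw, h⟩]
  have hfin : (A ∪ B).Finite := L.finite_toSet.subset <| by
    rintro u (⟨w, -, h⟩ | ⟨w, -, h⟩) <;> exact h.subset (by simp)
  -- the last vertex `z` has no successor
  have hA : A.ncard ≤ (X \ {z}).ncard :=
    Set.ncard_le_ncard_of_exists_rel (r := fun u w ↦ [w, u] <:+: L) hX.sdiff
      (fun u ⟨w, hw, h⟩ ↦
        ⟨w, ⟨hw, fun hwz ↦ hL.getLast?_ne_of_pair_infix h (hwz ▸ hlast)⟩, h⟩)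
      fun _ _ _ h h' ↦ hL.eq_of_pair_infix_left h h'
  have hB : B.ncard ≤ X.ncard :=
    Set.ncard_le_ncard_of_exists_rel (r := fun u w ↦ [u, w] <:+: L) hX
      (fun u ⟨w, hw, h⟩ ↦ ⟨w, hw, h⟩) fun _ _ _ h h' ↦ hL.eq_of_pair_infix_right h h'
  have hXz := Set.ncard_sdiff_singleton_lt_of_mem hz hX
  calc (extN L.consecutiveGraph X).ncard ≤ (A ∪ B).ncard := Set.ncard_le_ncard hsub hfin
    _ ≤ A.ncard + B.ncard := Set.ncard_union_le A B
    _ < 2 * X.ncard := by omega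

end List

open List Relation

section Rotation

variable {α : Type*} {G : SimpleGraph α} {L M M' : List α} {s u x y : α}

theorem Rotation.perm (h : Rotation G M M') : M' ~ M := by
  obtain ⟨P, S, v, -, rfl, rfl, -⟩ := h
  exact ((reverse_perm S).cons v).append_left P

theorem Rotation.head?_eq (h : Rotation G M M') : M'.head? = M.head? := by
  obtain ⟨P, S, v, -, rfl, rfl, -⟩ := h
  cases P <;> rfl

theorem Rotation.isPathList (h : Rotation G M M') (hM : IsPathList G M) : IsPathList G M' := by
  obtain ⟨-, hchain, hnodup⟩ := hM
  obtain ⟨P, S, v, hS, rfl, rfl, hadj⟩ := h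
  refine ⟨by simp, ?_, (((reverse_perm S).cons v).append_left P).nodup_iff.2 hnodup⟩
  rw [Chain', isChain_append, isChain_cons] at hchain ⊢
  obtain ⟨hP, ⟨-, hS'⟩, hPv⟩ := hchain
  refine ⟨hP, ⟨?_, isChain_reverse.2 (hS'.imp fun _ _ h ↦ h.symm)⟩, hPv⟩
  intro y hy
  rw [head?_reverse, getLast?_eq_some_getLast hS, Option.mem_some_iff] at hy
  exact hy ▸ hadj.symm

theorem Rotation.consecutiveGraph_adj (h : Rotation G M M') (hxy : M.consecutiveGraph.Adj x y) :
    M'.consecutiveGraph.Adj x y ∨ M'.getLast? = some x ∨ M'.getLast? = some y := by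
  have key : ∀ {x y}, [x, y] <:+: M →
      [x, y] <:+: M' ∨ [y, x] <:+: M' ∨ M'.getLast? = some y := by
    obtain ⟨P, _ | ⟨s, S⟩, v, hS, rfl, rfl, -⟩ := h
    · exact absurd rfl hS
    intro x y hxy
    rcases pair_infix_append_iff.1 hxy with h | h | ⟨hx, hy⟩
    · exact Or.inl (infix_append_of_infix_left h)
    · rcases infix_cons_iff.1 h with h | h
      · obtain rfl := singleton_prefix_cons_iff.1 (cons_prefix_cons.1 h).2
        simp [getLast?_cons, -reverse_cons]
      · exact Or.inr (Or.inl (infix_append_of_infix_right (infix_cons (reverse_infix.2 h))))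
    · obtain rfl : v = y := by simpa using hy
      exact Or.inl (pair_infix_append_iff.2 (Or.inr (Or.inr ⟨hx, rfl⟩)))
  simp only [consecutiveGraph, fromRel_adj] at hxy ⊢
  have := @key x y
  have := @key y x
  tauto

theorem exists_rotation_getLast?_eq (hus : [u, s] <:+: M) (hx : M.getLast? = some x)
    (hxu : G.Adj x u) : ∃ M', Rotation G M M' ∧ M'.getLast? = some s := by
  obtain ⟨P, S, rfl⟩ := pair_infix_iff.1 hus
  refine ⟨P ++ u :: (s :: S).reverse, ⟨P, s :: S, u, cons_ne_nil _ _, rfl, rfl, ?_⟩,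
    by simp [getLast?_cons, -reverse_cons]⟩
  rw [getLast?_append_cons, getLast?_cons_cons, getLast?_eq_some_getLast (cons_ne_nil _ _)] at hx
  rwa [Option.some_inj.1 hx]

theorem perm_of_reflTransGen_rotation (h : ReflTransGen (Rotation G) L M) : M ~ L := by
  induction h with
  | refl => rfl
  | tail _ hrot ih => exact hrot.perm.trans ih

theorem head?_eq_of_reflTransGen_rotation (h : ReflTransGen (Rotation G) L M) :
    M.head? = L.head? := by
  induction h with
  | refl => rfl
  | tail _ hrot ih => rw [hrot.head?_eq, ih]

theorem IsPathList.of_reflTransGen_rotation (hL : IsPathList G L)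
    (h : ReflTransGen (Rotation G) L M) : IsPathList G M := by
  induction h with
  | refl => exact hL
  | tail _ hrot ih => exact hrot.isPathList ih

theorem consecutiveGraph_adj_of_reflTransGen_rotation (hx : x ∉ ENDSet G L)
    (hy : y ∉ ENDSet G L) (hxy : L.consecutiveGraph.Adj x y)
    (h : ReflTransGen (Rotation G) L M) : M.consecutiveGraph.Adj x y := by
  induction h with
  | refl => exact hxy
  | tail hLM hrot ih =>
    rcases hrot.consecutiveGraph_adj ih with h | h | h
    exacts [h, absurd ⟨_, hLM.tail hrot, h⟩ hx, absurd ⟨_, hLM.tail hrot, h⟩ hy]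

theorem IsPathList.mem_of_adj_getLast? (hM : IsPathList G M)
    (hlongest : ∀ M', IsPathList G M' → M'.length ≤ M.length) (hx : M.getLast? = some x)
    (hxu : G.Adj x u) : u ∈ M := by
  by_contra hu
  have hMu : IsPathList G (M ++ [u]) := by
    refine ⟨by simp, ?_, nodup_append.2 ⟨hM.2.2, nodup_singleton u, ?_⟩⟩
    · refine isChain_append.2 ⟨hM.2.1, isChain_singleton u, ?_⟩
      rw [hx]
      simpa using hxu
    · simp only [mem_singleton]
      rintro a ha _ rfl rfl
      exact hu ha
  simpa using hlongest _ hMu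

theorem extN_ENDSet_subset_extN_consecutiveGraph (hL : IsPathList G L)
    (hlongest : ∀ L', IsPathList G L' → L'.length ≤ L.length) :
    extN G (ENDSet G L) ⊆ extN L.consecutiveGraph (ENDSet G L) := by
  rintro u ⟨huE, x, ⟨L₁, hreach, hx⟩, hxu⟩
  refine ⟨huE, ?_⟩
  by_contra! hno
  have hL₁ := hL.of_reflTransGen_rotation hreach
  have hperm := perm_of_reflTransGen_rotation hreach
  have hnotLast : ∀ M, ReflTransGen (Rotation G) L M → M.getLast? ≠ some u :=
    fun M hM h ↦ huE ⟨M, hM, h⟩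
  have huL₁ : u ∈ L₁ :=
    hL₁.mem_of_adj_getLast? (fun M hM ↦ hperm.length_eq ▸ hlongest M hM) hx hxu
  obtain ⟨s, hus⟩ := exists_pair_infix_of_mem huL₁ (hnotLast L₁ hreach)
  have hsE : s ∈ ENDSet G L :=
    let ⟨M, hrot, hM⟩ := exists_rotation_getLast?_eq hus hx hxu
    ⟨M, hreach.tail hrot, hM⟩
  -- the `L`-neighbours of `u` stay next to `u` in `L₁` but differ from its successor `s`
  have hpred : ∀ w, L.consecutiveGraph.Adj w u → [w, u] <:+: L₁ := fun w hw ↦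
    have hwE : w ∉ ENDSet G L := fun h ↦ hno w h hw
    hL₁.2.2.pair_infix_of_consecutiveGraph_adj
      (consecutiveGraph_adj_of_reflTransGen_rotation hwE huE hw hreach) hus
      fun h ↦ hwE (h ▸ hsE)
  have huL : u ∈ L := hperm.subset huL₁
  by_cases hhead : L.head? = some u
  · obtain ⟨t, hut⟩ := exists_pair_infix_of_mem huL (hnotLast L .refl)
    have htu := hpred t (hL.2.2.consecutiveGraph_adj_of_pair_infix hut).symm
    exact hL₁.2.2.head?_ne_of_pair_infix htu (head?_eq_of_reflTransGen_rotation hreach ▸ hhead)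
  · obtain ⟨w, t, hwut⟩ := exists_triple_infix_of_mem huL hhead (hnotLast L .refl)
    have hwu : [w, u] <:+: L := (infix_append [] [w, u] [t]).trans hwut
    have hut : [u, t] <:+: L := (infix_append [w] [u, t] []).trans hwut
    have hwt : w ≠ t :=
      (by simpa using hL.2.2.sublist hwut.sublist : (w ≠ u ∧ w ≠ t) ∧ u ≠ t).1.2
    exact hwt (hL₁.2.2.eq_of_pair_infix_right
      (hpred w (hL.2.2.consecutiveGraph_adj_of_pair_infix hwu))
      (hpred t (hL.2.2.consecutiveGraph_adj_of_pair_infix hut).symm))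

end Rotation

theorem extN_ENDSet_lt_general (G : SimpleGraph V) (L : List V) (hL : IsPathList G L)
    (hlongest : ∀ L' : List V, IsPathList G L' → L'.length ≤ L.length) :
    (extN G (ENDSet G L)).ncard < 2 * (ENDSet G L).ncard := by
  obtain ⟨z, hz⟩ : ∃ z, L.getLast? = some z := ⟨_, getLast?_eq_some_getLast hL.1⟩
  calc (extN G (ENDSet G L)).ncard
      ≤ (extN L.consecutiveGraph (ENDSet G L)).ncard :=
        Set.ncard_le_ncard (extN_ENDSet_subset_extN_consecutiveGraph hL hlongest)
    _ < 2 * (ENDSet G L).ncard :=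
        hL.2.2.ncard_extN_consecutiveGraph_lt (Set.toFinite _) ⟨L, .refl, hz⟩ hz

/-- For a longest path `P` with endpoint `a` in a connected graph,
`|N(END(P,a))| < 2 |END(P,a)|`. -/
theorem extN_ENDSet_lt (G : SimpleGraph V) (hconn : G.Connected)
    (L : List V) (a : V)
    (hL : IsPathList G L) (ha : L.head? = some a)
    (hlongest : ∀ L' : List V, IsPathList G L' → L'.length ≤ L.length) :
    (extN G (ENDSet G L)).ncard < 2 * (ENDSet G L).ncard :=
  extN_ENDSet_lt_general G L hL hlongest
end

section
/- In the uniform attachment graph $G_{n,k}$, for any two $\ell$-subsets $X, Y$ of $[n]$ with $X \preceq_\ell Y$ in the lexicographic (componentwise) order, the random variable $|N(X)|$ stochastically dominates $|N(Y)|$; that is, for every integer $m$, $\mathbb{P}(|N(X)| \ge m) \ge \mathbb{P}(|N(Y)| \ge m)$. -/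
open Finset
open scoped Classical

/-!
Shifting one element `a ∈ X` up to `a + 1 ∉ X` can only shrink `|N(X)|` in distribution: the
transposition of `a` and `a + 1`, applied to the choices of all vertices except in the rounds where
`a + 1` chose `a`, is an involution of the choice sequences that maps `N(X - a + (a + 1))` injectively
into the neighbourhood of `X` in the new graph. If `X ⪯ Y`, then `Y` is reached from `X` by such
shifts: raise the last entry of `X` that is still below the corresponding entry of `Y`.
-/

/-- The set of valid choice sequences for the uniform attachment graph on `n`
vertices (labelled `0, …, n-1`, corresponding to `1, …, n` in the paper): each
vertex `j ≥ 1` makes `k` choices among the earlier vertices `0, …, j-1`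
(vertex `0` is forced to the dummy value `0`, which creates no edge). -/
noncomputable def UAValid (n k : ℕ) : Finset (Fin n → Fin k → Fin n) :=
  Finset.univ.filter (fun z => ∀ j i, (z j i : ℕ) < max (j : ℕ) 1)

noncomputable def UAGraph (n k : ℕ) (z : Fin n → Fin k → Fin n) :
    SimpleGraph (Fin n) :=
  SimpleGraph.fromRel (fun u v => (u : ℕ) < v ∧ ∃ i, z v i = u)

noncomputable def UAProb (n k : ℕ) (E : (Fin n → Fin k → Fin n) → Prop) : ℝ :=
  ((UAValid n k).filter E).card / (UAValid n k).card

noncomputable def extNbhd {V : Type*} [Fintype V] (G : SimpleGraph V)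
    (X : Finset V) : Finset V :=
  Finset.univ.filter (fun u => u ∉ X ∧ ∃ x ∈ X, G.Adj x u)

variable {n k : ℕ}

lemma mem_UAValid {z : Fin n → Fin k → Fin n} :
    z ∈ UAValid n k ↔ ∀ j i, (z j i : ℕ) < max (j : ℕ) 1 := by
  simp [UAValid]

lemma UAGraph_adj_iff {z : Fin n → Fin k → Fin n} (hz : z ∈ UAValid n k) {u v : Fin n} :
    (UAGraph n k z).Adj u v ↔ u ≠ v ∧ ∃ i, z v i = u ∨ z u i = v := by
  rw [mem_UAValid] at hz
  simp only [UAGraph, SimpleGraph.fromRel_adj]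
  constructor
  · rintro ⟨huv, ⟨-, i, hi⟩ | ⟨-, i, hi⟩⟩
    exacts [⟨huv, i, Or.inl hi⟩, ⟨huv, i, Or.inr hi⟩]
  · rintro ⟨huv, i, hi | hi⟩
    · have := hz v i
      refine ⟨huv, Or.inl ⟨?_, i, hi⟩⟩
      have := Fin.val_ne_of_ne huv
      subst hi
      omega
    · have := hz u i
      refine ⟨huv, Or.inr ⟨?_, i, hi⟩⟩
      have := Fin.val_ne_of_ne huv
      subst hi
      omega

/-- Relabel the vertices by the transposition `a ↔ b`, except in the rounds `i` where `b`
chose `a`: there `a` and `b` keep their own choices. -/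
noncomputable def swapChoices (a b : Fin n) (z : Fin n → Fin k → Fin n) :
    Fin n → Fin k → Fin n :=
  fun j i => if (j = a ∨ j = b) ∧ z b i = a then z j i
    else Equiv.swap a b (z (Equiv.swap a b j) i)

lemma swapChoices_apply (a b : Fin n) (z : Fin n → Fin k → Fin n) (j : Fin n) (i : Fin k) :
    swapChoices a b z j i = if (j = a ∨ j = b) ∧ z b i = a then z j i
      else Equiv.swap a b (z (Equiv.swap a b j) i) := rfl

lemma Finset.swap_mem_iff_mem_insert_erase {α : Type*} [DecidableEq α] {X : Finset α} {a b : α}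
    (haX : a ∈ X) (hbX : b ∉ X) (w : α) :
    Equiv.swap a b w ∈ X ↔ w ∈ insert b (X.erase a) := by
  have hab : a ≠ b := ne_of_mem_of_not_mem haX hbX
  by_cases hwa : w = a
  · subst hwa
    simp [hbX, hab]
  by_cases hwb : w = b
  · subst hwb
    simp [haX]
  · simp [Equiv.swap_apply_of_ne_of_ne hwa hwb, hwa, hwb]

section swapChoices

variable {a b : Fin n} (hab : (b : ℕ) = a + 1) {z : Fin n → Fin k → Fin n}
include hab

lemma swapChoices_mem_UAValid (hz : z ∈ UAValid n k) : swapChoices a b z ∈ UAValid n k := by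
  rw [mem_UAValid] at hz ⊢
  intro j i
  have := hz a i
  have := hz b i
  have := hz j i
  simp only [swapChoices, Equiv.swap_apply_def]
  split_ifs <;> simp only [Fin.ext_iff] at * <;> omega

lemma swapChoices_apply_right_eq_left_iff (hz : z ∈ UAValid n k) (i : Fin k) :
    swapChoices a b z b i = a ↔ z b i = a := by
  have hza : z a i ≠ b := fun h => by
    have := mem_UAValid.mp hz a i
    rw [h] at this
    omega
  by_cases hc : z b i = a
  · simp [swapChoices_apply, hc]
  · simp [swapChoices_apply, hc, Equiv.swap_apply_eq_iff, hza]

lemma swapChoices_swapChoices (hz : z ∈ UAValid n k) :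
    swapChoices a b (swapChoices a b z) = z := by
  funext j i
  have hc := swapChoices_apply_right_eq_left_iff hab hz i
  by_cases h : (j = a ∨ j = b) ∧ z b i = a
  · rw [swapChoices_apply, if_pos ⟨h.1, hc.mpr h.2⟩, swapChoices_apply, if_pos h]
  · have hσ : ¬((Equiv.swap a b j = a ∨ Equiv.swap a b j = b) ∧ z b i = a) := by
      rw [Equiv.swap_apply_eq_iff, Equiv.swap_apply_eq_iff, Equiv.swap_apply_left,
        Equiv.swap_apply_right]
      tauto
    rw [swapChoices_apply, if_neg fun h' => h ⟨h'.1, hc.mp h'.2⟩, swapChoices_apply, if_neg hσ,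
      Equiv.swap_apply_self, Equiv.swap_apply_self]

lemma UAGraph_swapChoices_adj_of_apply_eq (hz : z ∈ UAValid n k) {u v : Fin n} {i : Fin k}
    (hi : z v i = u) (huv : u ≠ v) :
    (UAGraph n k (swapChoices a b z)).Adj (Equiv.swap a b u) (Equiv.swap a b v) ∨
      ((UAGraph n k (swapChoices a b z)).Adj a b ∧ v = a) := by
  have hz' := swapChoices_mem_UAValid hab hz
  have hba : b ≠ a := fun h => by rw [h] at hab; omega
  by_cases hc : (v = a ∨ v = b) ∧ z b i = a
  · have hadj : (UAGraph n k (swapChoices a b z)).Adj u v :=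
      (UAGraph_adj_iff hz').mpr ⟨huv, i, Or.inl (by rw [swapChoices_apply, if_pos hc, hi])⟩
    obtain ⟨rfl | rfl, hba_i⟩ := hc
    · refine Or.inr ⟨(UAGraph_adj_iff hz').mpr ⟨hba.symm, i, Or.inl ?_⟩, rfl⟩
      rw [swapChoices_apply, if_pos ⟨Or.inr rfl, hba_i⟩, hba_i]
    · obtain rfl : u = a := hi ▸ hba_i
      left
      rw [Equiv.swap_apply_left, Equiv.swap_apply_right]
      exact hadj.symm
  · refine Or.inl ((UAGraph_adj_iff hz').mpr ⟨(Equiv.injective _).ne huv, i, Or.inl ?_⟩)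
    rw [swapChoices_apply, if_neg, Equiv.swap_apply_self, hi]
    rwa [Equiv.swap_apply_eq_iff, Equiv.swap_apply_eq_iff, Equiv.swap_apply_left,
      Equiv.swap_apply_right, or_comm]

lemma UAGraph_swapChoices_adj (hz : z ∈ UAValid n k) {u v : Fin n}
    (h : (UAGraph n k z).Adj u v) :
    (UAGraph n k (swapChoices a b z)).Adj (Equiv.swap a b u) (Equiv.swap a b v) ∨
      ((UAGraph n k (swapChoices a b z)).Adj a b ∧ (u = a ∨ v = a)) := by
  obtain ⟨huv, i, hi | hi⟩ := (UAGraph_adj_iff hz).mp h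
  · exact (UAGraph_swapChoices_adj_of_apply_eq hab hz hi huv).imp_right
      fun h => ⟨h.1, Or.inr h.2⟩
  · exact (UAGraph_swapChoices_adj_of_apply_eq hab hz hi huv.symm).imp
      (fun h => h.symm) fun h => ⟨h.1, Or.inl h.2⟩

lemma card_extNbhd_insert_erase_le {X : Finset (Fin n)} (haX : a ∈ X) (hbX : b ∉ X)
    (hz : z ∈ UAValid n k) :
    #(extNbhd (UAGraph n k z) (insert b (X.erase a)))
      ≤ #(extNbhd (UAGraph n k (swapChoices a b z)) X) := by
  have hmem := swap_mem_iff_mem_insert_erase haX hbX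
  refine card_le_card_of_injOn (Equiv.swap a b) (fun u hu => ?_) (Equiv.injective _).injOn
  simp only [extNbhd, coe_filter, mem_univ, true_and, Set.mem_ofPred_eq] at hu ⊢
  obtain ⟨huY, y, hyY, hyu⟩ := hu
  refine ⟨(hmem u).not.mpr huY, ?_⟩
  rcases UAGraph_swapChoices_adj hab hz hyu with h | ⟨h, rfl | rfl⟩
  · exact ⟨_, (hmem y).mpr hyY, h⟩
  · exact absurd ((hmem y).mpr hyY) (by rwa [Equiv.swap_apply_left])
  · exact ⟨u, haX, by rwa [Equiv.swap_apply_left]⟩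

end swapChoices

lemma UAProb_le_of_injOn {E F : (Fin n → Fin k → Fin n) → Prop}
    (φ : (Fin n → Fin k → Fin n) → Fin n → Fin k → Fin n)
    (hφ : ∀ z ∈ UAValid n k, φ z ∈ UAValid n k) (hinj : Set.InjOn φ (UAValid n k))
    (hEF : ∀ z ∈ UAValid n k, E z → F (φ z)) : UAProb n k E ≤ UAProb n k F := by
  refine div_le_div_of_nonneg_right (Nat.cast_le.mpr ?_) (Nat.cast_nonneg _)
  refine card_le_card_of_injOn φ (fun z hz => ?_)
    (hinj.mono (coe_subset.mpr (filter_subset E _)))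
  obtain ⟨hzv, hE⟩ := mem_filter.mp hz
  exact mem_filter.mpr ⟨hφ z hzv, hEF z hzv hE⟩

lemma UAProb_extNbhd_insert_erase_le {a b : Fin n} (hab : (b : ℕ) = a + 1)
    {X : Finset (Fin n)} (haX : a ∈ X) (hbX : b ∉ X) (m : ℕ) :
    UAProb n k (fun z => m ≤ #(extNbhd (UAGraph n k z) (insert b (X.erase a))))
      ≤ UAProb n k (fun z => m ≤ #(extNbhd (UAGraph n k z) X)) :=
  UAProb_le_of_injOn (swapChoices a b) (fun _ hz => swapChoices_mem_UAValid hab hz)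
    (fun z hz w hw h => by
      rw [← swapChoices_swapChoices hab hz, h, swapChoices_swapChoices hab hw])
    (fun _ hz h => h.trans (card_extNbhd_insert_erase_le hab haX hbX hz))

def IsShift (X X' : Finset (Fin n)) : Prop :=
  ∃ a b : Fin n, (b : ℕ) = a + 1 ∧ a ∈ X ∧ b ∉ X ∧ X' = insert b (X.erase a)

lemma UAProb_extNbhd_le_of_reflTransGen {X Y : Finset (Fin n)}
    (h : Relation.ReflTransGen IsShift X Y) (m : ℕ) :
    UAProb n k (fun z => m ≤ #(extNbhd (UAGraph n k z) Y))
      ≤ UAProb n k (fun z => m ≤ #(extNbhd (UAGraph n k z) X)) := by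
  induction h with
  | refl => exact le_rfl
  | tail _ hshift ih =>
    obtain ⟨a, b, hab, haX, hbX, rfl⟩ := hshift
    exact (UAProb_extNbhd_insert_erase_le hab haX hbX m).trans ih

lemma StrictMono.update {ι α : Type*} [LinearOrder ι] [DecidableEq ι] [Preorder α]
    {f : ι → α} (hf : StrictMono f) {i : ι} {x : α} (hlt : ∀ j < i, f j < x)
    (hgt : ∀ j, i < j → x < f j) : StrictMono (Function.update f i x) := by
  intro j j' hjj'
  rcases eq_or_ne j i with rfl | hj
  · rw [Function.update_self, Function.update_of_ne hjj'.ne']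
    exact hgt j' hjj'
  rcases eq_or_ne j' i with rfl | hj'
  · rw [Function.update_self, Function.update_of_ne hj]
    exact hlt j hjj'
  rw [Function.update_of_ne hj, Function.update_of_ne hj']
  exact hf hjj'

lemma Finset.image_univ_update {ι α : Type*} [Fintype ι] [DecidableEq ι] [DecidableEq α]
    {f : ι → α} (hf : Function.Injective f) (i : ι) (x : α) :
    univ.image (Function.update f i x) = insert x ((univ.image f).erase (f i)) := by
  conv_lhs => rw [← insert_erase (mem_univ i)]
  rw [image_insert, Function.update_self, ← image_erase hf]
  congr 1
  exact image_congr fun j hj => Function.update_of_ne (ne_of_mem_erase hj) x f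

lemma exists_isShift_image_update {ℓ : ℕ} {f g : Fin ℓ → Fin n} (hf : StrictMono f)
    (hg : StrictMono g) (hfg : f < g) :
    ∃ f' : Fin ℓ → Fin n, StrictMono f' ∧ f' ≤ g ∧
      ∑ j, ((g j : ℕ) - f' j) < ∑ j, ((g j : ℕ) - f j) ∧
      IsShift (univ.image f) (univ.image f') := by
  obtain ⟨hfg, hex⟩ := Pi.lt_def.mp hfg
  set S := univ.filter fun j => f j < g j
  have hS : S.Nonempty := by simpa [S, Finset.Nonempty] using hex
  set i := S.max' hS
  have hi : (f i : ℕ) < g i := (mem_filter.mp (S.max'_mem hS)).2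
  have hmax : ∀ j, i < j → f j = g j := fun j hij =>
    (hfg j).eq_of_not_lt fun h => (S.le_max' j (by simp [S, h])).not_gt hij
  set b : Fin n := ⟨f i + 1, by have := (g i).isLt; omega⟩
  have hb : (b : ℕ) = f i + 1 := rfl
  have hf' : StrictMono (Function.update f i b) := hf.update
    (fun j hj => (hf hj).trans (Fin.lt_def.mpr (Nat.lt_succ_self _)))
    (fun j hj => (hmax j hj).symm ▸ lt_of_le_of_lt (Fin.le_def.mpr hi) (hg hj))
  have hbf : b ∉ univ.image f := by
    simp only [mem_image, mem_univ, true_and, not_exists]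
    intro j hj
    rcases eq_or_ne j i with rfl | hji
    · exact absurd (congrArg Fin.val hj) (by omega)
    · exact hf'.injective.ne hji (by rw [Function.update_of_ne hji, Function.update_self, hj])
  refine ⟨_, hf', fun j => ?_, sum_lt_sum (fun j _ => ?_) ⟨i, mem_univ i, ?_⟩,
    ⟨f i, b, rfl, mem_image_of_mem f (mem_univ i), hbf, image_univ_update hf.injective i b⟩⟩
  · rcases eq_or_ne j i with rfl | hji
    · rw [Function.update_self, Fin.le_def, hb]
      omega
    · rw [Function.update_of_ne hji]
      exact hfg j
  · rcases eq_or_ne j i with rfl | hji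
    · rw [Function.update_self, hb]
      omega
    · rw [Function.update_of_ne hji]
  · rw [Function.update_self, hb]
    omega

theorem reflTransGen_isShift_image_of_le {ℓ : ℕ} {f g : Fin ℓ → Fin n} (hf : StrictMono f)
    (hg : StrictMono g) (hfg : f ≤ g) :
    Relation.ReflTransGen IsShift (univ.image f) (univ.image g) := by
  rcases hfg.eq_or_lt with rfl | hlt
  · exact .refl
  obtain ⟨f', hf', hf'g, hdec, hshift⟩ := exists_isShift_image_update hf hg hlt
  exact .head hshift (reflTransGen_isShift_image_of_le hf' hg hf'g)
termination_by ∑ j, ((g j : ℕ) - f j)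
decreasing_by exact hdec

theorem UA_stochastic_domination_general (n k ℓ : ℕ)
    (X Y : Finset (Fin n)) (hX : X.card = ℓ) (hY : Y.card = ℓ)
    (hlex : ∀ i : Fin ℓ, ((X.orderIsoOfFin hX i : Fin n) : ℕ)
      ≤ ((Y.orderIsoOfFin hY i : Fin n) : ℕ)) :
    ∀ m : ℕ,
      UAProb n k (fun z => m ≤ (extNbhd (UAGraph n k z) Y).card)
        ≤ UAProb n k (fun z => m ≤ (extNbhd (UAGraph n k z) X).card) := by
  intro m
  have hle : ⇑(X.orderEmbOfFin hX) ≤ ⇑(Y.orderEmbOfFin hY) := fun i => hlex i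
  have hchain := reflTransGen_isShift_image_of_le (X.orderEmbOfFin hX).strictMono
    (Y.orderEmbOfFin hY).strictMono hle
  rw [image_orderEmbOfFin_univ, image_orderEmbOfFin_univ] at hchain
  exact UAProb_extNbhd_le_of_reflTransGen hchain m

/-- If `X ⪯ Y` in the componentwise (lexicographic) order on `ℓ`-subsets, then
`|N(X)|` stochastically dominates `|N(Y)|` in `G_{n,k}`. -/
theorem UA_stochastic_domination (n k ℓ : ℕ) (hl : 0 < ℓ)
    (X Y : Finset (Fin n)) (hX : X.card = ℓ) (hY : Y.card = ℓ)
    (hlex : ∀ i : Fin ℓ, ((X.orderIsoOfFin hX i : Fin n) : ℕ)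
      ≤ ((Y.orderIsoOfFin hY i : Fin n) : ℕ)) :
    ∀ m : ℕ,
      UAProb n k (fun z => m ≤ (extNbhd (UAGraph n k z) Y).card)
        ≤ UAProb n k (fun z => m ≤ (extNbhd (UAGraph n k z) X).card) :=
  UA_stochastic_domination_general n k ℓ X Y hX hY hlex
end

section
/- Let $H(x) = -x\log_2 x - (1-x)\log_2(1-x)$ be the binary entropy function and let $k \ge 3$ be an integer. Then the function $f(x) = 2(k+1)x + H(2x) - kH(x)$ has a unique zero in the open interval $(0, 1/2)$. -/
/-!
In nats the function is `f x = 2(K+1) log 2 · x + h(2x) - K h(x)` with `h = Real.binEntropy`;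
then `f 0 = 0`, `f (1/2) = log 2 > 0` and `f (1/32) < 0`, so a zero exists by the intermediate
value theorem. Since `f'' x = ((K-2) - (2K-2)x) / (x(1-x)(1-2x))`, `f'` increases up to
`(K-2)/(2K-2)` and decreases afterwards. Two zeros `0 < a < b` would give, by Rolle, zeros of `f'`
in `(0, a)` and `(a, b)`, and by the mean value theorem on `[b, 1/2]` a later point where
`f' ≥ 0`; a function that first increases and then decreases cannot do this.
-/

open Real

/-- The binary entropy function `H(x) = -x log₂ x - (1-x) log₂ (1-x)`
(with the conventions `H 0 = H 1 = 0` coming from `logb 2 0 = 0`). -/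
noncomputable def binEnt (x : ℝ) : ℝ :=
  -x * Real.logb 2 x - (1 - x) * Real.logb 2 (1 - x)

open Set

lemma binEnt_eq_binEntropy_div_log_two (x : ℝ) : binEnt x = binEntropy x / log 2 := by
  simp only [binEnt, binEntropy, logb, log_inv]
  ring

lemma binEntropy_one_div {n : ℝ} (hn : 1 < n) :
    binEntropy (1 / n) = log n - (1 - 1 / n) * log (n - 1) := by
  have hn0 : n ≠ 0 := by positivity
  have hn1 : n - 1 ≠ 0 := by linarith
  have h : 1 - 1 / n = (n - 1) / n := by field_simp
  rw [binEntropy, h, one_div, inv_inv, inv_div, log_div hn0 hn1]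
  field_simp
  ring

lemma lt_of_eq_of_strictMonoOn_strictAntiOn {g : ℝ → ℝ} {a m b c₁ c₂ c₃ : ℝ}
    (hmono : StrictMonoOn g (Ioc a m)) (hanti : StrictAntiOn g (Ico m b))
    (ha : a < c₁) (h₁₂ : c₁ < c₂) (h₂₃ : c₂ < c₃) (hb : c₃ < b) (heq : g c₁ = g c₂) :
    g c₃ < g c₂ := by
  rcases le_or_gt c₂ m with hm | hm
  · exact absurd heq (hmono ⟨ha, h₁₂.le.trans hm⟩ ⟨ha.trans h₁₂, hm⟩ h₁₂).ne
  · exact hanti ⟨hm.le, h₂₃.trans hb⟩ ⟨hm.le.trans h₂₃.le, hb⟩ h₂₃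

theorem subsingleton_zeros_of_deriv_strictMonoOn_strictAntiOn {F F' : ℝ → ℝ} {a m b : ℝ}
    (hcont : ContinuousOn F (Icc a b)) (hderiv : ∀ x ∈ Ioo a b, HasDerivAt F (F' x) x)
    (ha : F a = 0) (hb : 0 ≤ F b)
    (hmono : StrictMonoOn F' (Ioc a m)) (hanti : StrictAntiOn F' (Ico m b)) :
    {x ∈ Ioo a b | F x = 0}.Subsingleton := by
  intro x ⟨hx, hFx⟩ y ⟨hy, hFy⟩
  wlog hxy : x < y generalizing x y
  · rcases (not_lt.1 hxy).lt_or_eq with h | h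
    · exact (this hy hFy hx hFx h).symm
    · exact h.symm
  exfalso
  have hcont' {u v : ℝ} (hu : a ≤ u) (hv : v ≤ b) : ContinuousOn F (Icc u v) :=
    hcont.mono (Icc_subset_Icc hu hv)
  have hderiv' {u v : ℝ} (hu : a ≤ u) (hv : v ≤ b) : ∀ z ∈ Ioo u v, HasDerivAt F (F' z) z :=
    fun z hz => hderiv z (Ioo_subset_Ioo hu hv hz)
  obtain ⟨c₁, hc₁, hF'c₁⟩ := exists_hasDerivAt_eq_zero hx.1 (hcont' le_rfl hx.2.le)
    (ha.trans hFx.symm) (hderiv' le_rfl hx.2.le)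
  obtain ⟨c₂, hc₂, hF'c₂⟩ := exists_hasDerivAt_eq_zero hxy (hcont' hx.1.le hy.2.le)
    (hFx.trans hFy.symm) (hderiv' hx.1.le hy.2.le)
  obtain ⟨c₃, hc₃, hF'c₃⟩ := exists_hasDerivAt_eq_slope F F' hy.2 (hcont' hy.1.le le_rfl)
    (hderiv' hy.1.le le_rfl)
  have hF'c₃_nonneg : 0 ≤ F' c₃ := by
    rw [hF'c₃, hFy, sub_zero]
    exact div_nonneg hb (sub_nonneg.2 hy.2.le)
  have := lt_of_eq_of_strictMonoOn_strictAntiOn hmono hanti hc₁.1 (hc₁.2.trans hc₂.1)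
    (hc₂.2.trans hc₃.1) hc₃.2 (hF'c₁.trans hF'c₂.symm)
  linarith

/-- `2(K+1)x + H(2x) - K H(x)` measured in nats, i.e. multiplied by `log 2`. -/
noncomputable def entropyCombo (K x : ℝ) : ℝ :=
  2 * (K + 1) * log 2 * x + binEntropy (2 * x) - K * binEntropy x

noncomputable def entropyComboDeriv (K x : ℝ) : ℝ :=
  2 * (K + 1) * log 2 + 2 * (log (1 - 2 * x) - log (2 * x)) - K * (log (1 - x) - log x)

section entropyCombo

variable {K x : ℝ}

lemma combo_binEnt_eq_entropyCombo_div :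
    2 * (K + 1) * x + binEnt (2 * x) - K * binEnt x = entropyCombo K x / log 2 := by
  have := (log_pos one_lt_two).ne'
  simp only [binEnt_eq_binEntropy_div_log_two, entropyCombo]
  field_simp

lemma continuous_entropyCombo (K : ℝ) : Continuous (entropyCombo K) := by
  unfold entropyCombo
  fun_prop

lemma entropyCombo_zero (K : ℝ) : entropyCombo K 0 = 0 := by
  simp [entropyCombo]

lemma entropyCombo_half (K : ℝ) : entropyCombo K (1 / 2) = log 2 := by
  rw [entropyCombo, mul_one_div_cancel two_ne_zero, one_div, binEntropy_one, binEntropy_two_inv]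
  ring

lemma hasDerivAt_entropyCombo (K : ℝ) (hx₀ : 0 < x) (hx : x < 1 / 2) :
    HasDerivAt (entropyCombo K) (entropyComboDeriv K x) x := by
  have h₂ : HasDerivAt (fun x => binEntropy (2 * x)) ((log (1 - 2 * x) - log (2 * x)) * 2) x :=
    (hasDerivAt_binEntropy (by positivity) (by linarith)).comp x
      (by simpa using (hasDerivAt_id x).const_mul (2 : ℝ))
  have h₁ := hasDerivAt_binEntropy hx₀.ne' (by linarith)
  refine ((((hasDerivAt_id x).const_mul (2 * (K + 1) * log 2)).add h₂).sub
    (h₁.const_mul K)).congr_deriv ?_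
  simp only [entropyComboDeriv]
  ring

lemma hasDerivAt_entropyComboDeriv (K : ℝ) (hx₀ : 0 < x) (hx : x < 1 / 2) :
    HasDerivAt (entropyComboDeriv K)
      (((K - 2) - (2 * K - 2) * x) / (x * (1 - x) * (1 - 2 * x))) x := by
  have h₁ : 1 - x ≠ 0 := by linarith
  have h₂ : 1 - 2 * x ≠ 0 := by linarith
  have hlog (c : ℝ) (hc : 1 - c * x ≠ 0) :
      HasDerivAt (fun x => log (1 - c * x)) (-c / (1 - c * x)) x := by
    have := ((hasDerivAt_id x).const_mul c).const_sub 1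
    simp only [id, mul_one] at this
    exact (this.log hc).congr_deriv (by ring)
  have hlog2 : HasDerivAt (fun x => log (2 * x)) (1 / x) x := by
    have := ((hasDerivAt_id x).const_mul 2).log (by positivity)
    simp only [id, mul_one] at this
    exact this.congr_deriv (by field_simp)
  have h := ((hasDerivAt_const x (2 * (K + 1) * log 2)).add
    (((hlog 2 h₂).sub hlog2).const_mul 2)).sub
    (((hlog 1 (by linarith)).sub (hasDerivAt_log hx₀.ne')).const_mul K)
  simp only [one_mul] at h
  refine h.congr_deriv ?_
  field_simp
  ring

lemma entropyComboDeriv_strictMonoOn (hK : 2 < K) :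
    StrictMonoOn (entropyComboDeriv K) (Ioc 0 ((K - 2) / (2 * K - 2))) := by
  have hden : 0 < 2 * K - 2 := by linarith
  have hm : (K - 2) / (2 * K - 2) < 1 / 2 := by rw [div_lt_iff₀ hden]; linarith
  refine strictMonoOn_of_deriv_pos (convex_Ioc _ _) (fun x hx => ?_) (fun x hx => ?_)
  · exact (hasDerivAt_entropyComboDeriv K hx.1 (hx.2.trans_lt hm)).continuousAt.continuousWithinAt
  · rw [interior_Ioc] at hx
    have hx₁ : x < 1 / 2 := hx.2.trans hm
    rw [(hasDerivAt_entropyComboDeriv K hx.1 hx₁).deriv]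
    have hnum : 0 < (K - 2) - (2 * K - 2) * x := by
      have := (lt_div_iff₀ hden).1 hx.2
      linarith
    have : 0 < 1 - x := by linarith
    have : 0 < 1 - 2 * x := by linarith
    have := hx.1
    positivity

lemma entropyComboDeriv_strictAntiOn (hK : 2 < K) :
    StrictAntiOn (entropyComboDeriv K) (Ico ((K - 2) / (2 * K - 2)) (1 / 2)) := by
  have hden : 0 < 2 * K - 2 := by linarith
  have hm : 0 < (K - 2) / (2 * K - 2) := div_pos (by linarith) hden
  refine strictAntiOn_of_deriv_neg (convex_Ico _ _) (fun x hx => ?_) (fun x hx => ?_)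
  · exact (hasDerivAt_entropyComboDeriv K (hm.trans_le hx.1) hx.2).continuousAt.continuousWithinAt
  · rw [interior_Ico] at hx
    have hx₀ : 0 < x := hm.trans hx.1
    rw [(hasDerivAt_entropyComboDeriv K hx₀ hx.2).deriv]
    have hnum : (K - 2) - (2 * K - 2) * x < 0 := by
      have := (div_lt_iff₀ hden).1 hx.1
      linarith
    have : 0 < 1 - x := by linarith [hx.2]
    have : 0 < 1 - 2 * x := by linarith [hx.2]
    exact div_neg_of_neg_of_pos hnum (by positivity)

lemma entropyCombo_one_div_thirtyTwo_neg (hK : 3 ≤ K) : entropyCombo K (1 / 32) < 0 := by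
  have hlog₁₆ : log 16 = 4 * log 2 := by
    rw [show (16 : ℝ) = 2 ^ 4 by norm_num, log_pow]; norm_num
  have hlog₃₂ : log 32 = 5 * log 2 := by
    rw [show (32 : ℝ) = 2 ^ 5 by norm_num, log_pow]; norm_num
  -- `32 * entropyCombo K (1 / 32) = K * (31 log 31 - 158 log 2) + 130 log 2 - 30 log 15`:
  -- `h₁` makes it decrease in `K`, `h₂` makes it negative at `K = 3`.
  have h₁ : 31 * log 31 < 158 * log 2 := by
    have := log_lt_log (by positivity) (by norm_num : (31 : ℝ) ^ 31 < 2 ^ 158)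
    rwa [log_pow, log_pow, Nat.cast_ofNat, Nat.cast_ofNat] at this
  have h₂ : 93 * log 31 < 86 * log 16 + 30 * log 15 := by
    have := log_lt_log (by positivity) (by norm_num : (31 : ℝ) ^ 93 < 16 ^ 86 * 15 ^ 30)
    rwa [log_mul (by positivity) (by positivity), log_pow, log_pow, log_pow, Nat.cast_ofNat,
      Nat.cast_ofNat, Nat.cast_ofNat] at this
  rw [entropyCombo, show 2 * (1 / 32 : ℝ) = 1 / 16 by norm_num,
    binEntropy_one_div (by norm_num), binEntropy_one_div (by norm_num), hlog₁₆, hlog₃₂]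
  norm_num
  nlinarith [mul_nonneg (sub_nonneg.2 hK) (sub_nonneg.2 h₁.le)]

theorem existsUnique_entropyCombo_eq_zero (hK : 3 ≤ K) :
    ∃! x, x ∈ Ioo (0 : ℝ) (1 / 2) ∧ entropyCombo K x = 0 := by
  have hhalf : 0 < entropyCombo K (1 / 2) := entropyCombo_half K ▸ log_pos one_lt_two
  obtain ⟨x, hx, hx₀⟩ := intermediate_value_Ioo (by norm_num : (1 / 32 : ℝ) ≤ 1 / 2)
    (continuous_entropyCombo K).continuousOn ⟨entropyCombo_one_div_thirtyTwo_neg hK, hhalf⟩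
  have hzeros := subsingleton_zeros_of_deriv_strictMonoOn_strictAntiOn
    (continuous_entropyCombo K).continuousOn (fun x hx => hasDerivAt_entropyCombo K hx.1 hx.2)
    (entropyCombo_zero K) hhalf.le (entropyComboDeriv_strictMonoOn (by linarith))
    (entropyComboDeriv_strictAntiOn (by linarith))
  have hxmem : x ∈ Ioo (0 : ℝ) (1 / 2) := ⟨by linarith [hx.1], hx.2⟩
  exact ⟨x, ⟨hxmem, hx₀⟩, fun y hy => hzeros hy ⟨hxmem, hx₀⟩⟩

end entropyCombo

theorem unique_zero_alpha1 (k : ℕ) (hk : 3 ≤ k) :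
    ∃! x : ℝ, x ∈ Set.Ioo (0 : ℝ) (1 / 2) ∧
      2 * (k + 1) * x + binEnt (2 * x) - k * binEnt x = 0 := by
  simp_rw [combo_binEnt_eq_entropyCombo_div, div_eq_zero_iff, (log_pos one_lt_two).ne', or_false]
  exact existsUnique_entropyCombo_eq_zero (by exact_mod_cast hk)
end

section
/- Let $H(x) = -x\log_2 x - (1-x)\log_2(1-x)$ and $g(x) = \log_2(27/4) \cdot 11 \cdot x + H(3x) - 10 H(x)$ (the case $k = 10$). Then $g(0.221) < 0$; consequently the unique zero $\alpha_2(10)$ of $g$ in $(0,1/3)$ satisfies $\alpha_2(10) > 0.221$. -/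
open Real

/-- `g x = log₂(27/4)(k+1)x + H(3x) - kH(x)` for `k = 10`. -/
noncomputable def g10 (x : ℝ) : ℝ :=
  Real.logb 2 (27 / 4) * 11 * x + binEnt (3 * x) - 10 * binEnt x

/-!
Since `H''(x) = -1 / (x (1 - x) ln 2)`, the second derivative of `g` is
`(7 - 27x) / (x (1 - x) (1 - 3x) ln 2)`, so `g` is convex on `[0, 7/27]`. As `g 0 = 0` and
`g 0.221 < 0`, convexity forces `g < 0` on `(0, 0.221]`, so every zero of `g` in `(0, 1/3)`
lies beyond `0.221`.
-/

open Set

theorem ConvexOn.neg_of_mem_Ioc {f : ℝ → ℝ} {b x : ℝ} (hf : ConvexOn ℝ (Icc 0 b) f)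
    (h0 : f 0 = 0) (hb : f b < 0) (hx : x ∈ Ioc 0 b) : f x < 0 := by
  have hb0 : 0 < b := hx.1.trans_le hx.2
  rcases hx.2.eq_or_lt with rfl | hxb
  · exact hb
  by_contra! hfx
  have hseg : x ∈ openSegment ℝ b 0 := by
    rw [openSegment_symm, openSegment_eq_Ioo hb0]
    exact ⟨hx.1, hxb⟩
  have := hf.lt_right_of_left_lt (right_mem_Icc.2 hb0.le) (left_mem_Icc.2 hb0.le) hseg
    (hb.trans_le hfx)
  linarith

lemma binEnt_eq_binEntropy_div : binEnt = fun x ↦ binEntropy x / log 2 := by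
  ext x
  simp only [binEnt, binEntropy, logb, log_inv]
  ring

lemma hasDerivAt_binEnt {x : ℝ} (h0 : x ≠ 0) (h1 : x ≠ 1) :
    HasDerivAt binEnt ((log (1 - x) - log x) / log 2) x :=
  binEnt_eq_binEntropy_div ▸ (hasDerivAt_binEntropy h0 h1).div_const (log 2)

lemma hasDerivAt_log_one_sub_sub_log {x : ℝ} (h0 : x ≠ 0) (h1 : x ≠ 1) :
    HasDerivAt (fun y ↦ log (1 - y) - log y) (-1 / (x * (1 - x))) x := by
  have h1' : 1 - x ≠ 0 := sub_ne_zero.mpr h1.symm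
  refine ((((hasDerivAt_id x).const_sub 1).log h1').sub ((hasDerivAt_id x).log h0)).congr_deriv ?_
  simp only [id]
  field_simp
  ring

lemma g10_zero : g10 0 = 0 := by
  simp [g10, binEnt]

lemma continuous_g10 : Continuous g10 := by
  unfold g10
  rw [binEnt_eq_binEntropy_div]
  fun_prop

noncomputable def g10Deriv (x : ℝ) : ℝ :=
  logb 2 (27 / 4) * 11 + (3 * (log (1 - 3 * x) - log (3 * x)) - 10 * (log (1 - x) - log x)) / log 2

lemma hasDerivAt_g10 {x : ℝ} (h0 : 0 < x) (h1 : x < 1 / 3) : HasDerivAt g10 (g10Deriv x) x := by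
  have h3 := (hasDerivAt_binEnt (x := 3 * x) (by positivity) (by linarith)).comp x
    ((hasDerivAt_id x).const_mul 3)
  refine ((((hasDerivAt_id x).const_mul (logb 2 (27 / 4) * 11)).add h3).sub
    ((hasDerivAt_binEnt h0.ne' (by linarith)).const_mul 10)).congr_deriv ?_
  rw [g10Deriv]
  ring

lemma hasDerivAt_g10Deriv {x : ℝ} (h0 : 0 < x) (h1 : x < 1 / 3) :
    HasDerivAt g10Deriv ((7 - 27 * x) / (x * (1 - x) * (1 - 3 * x) * log 2)) x := by
  have h3 := (hasDerivAt_log_one_sub_sub_log (x := 3 * x) (by positivity) (by linarith)).comp x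
    ((hasDerivAt_id x).const_mul 3)
  have h1' := hasDerivAt_log_one_sub_sub_log h0.ne' (by linarith)
  have h := (h3.const_mul 3).sub (h1'.const_mul 10)
  refine ((h.div_const (log 2)).const_add (logb 2 (27 / 4) * 11)).congr_deriv ?_
  have : 1 - x ≠ 0 := by linarith
  have : 1 - 3 * x ≠ 0 := by linarith
  field_simp
  ring

lemma convexOn_g10 : ConvexOn ℝ (Icc 0 (7 / 27)) g10 := by
  refine convexOn_of_hasDerivWithinAt2_nonneg (f' := g10Deriv)
    (f'' := fun x ↦ (7 - 27 * x) / (x * (1 - x) * (1 - 3 * x) * log 2))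
    (convex_Icc _ _) continuous_g10.continuousOn
    (fun x hx ↦ ?_) (fun x hx ↦ ?_) (fun x hx ↦ ?_)
  all_goals
    simp only [interior_Icc] at hx ⊢
    obtain ⟨h0, h1⟩ := hx
  · exact (hasDerivAt_g10 h0 (by linarith)).hasDerivWithinAt
  · exact (hasDerivAt_g10Deriv h0 (by linarith)).hasDerivWithinAt
  · have : 0 < 1 - x := by linarith
    have : 0 < 1 - 3 * x := by linarith
    have : 0 < log 2 := log_pos one_lt_two
    exact div_nonneg (by linarith) (by positivity)

lemma log_two_mul_g10 (x : ℝ) :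
    log 2 * g10 x = 11 * x * log (27 / 4) - 3 * x * log (3 * x) - (1 - 3 * x) * log (1 - 3 * x)
      + 10 * x * log x + 10 * (1 - x) * log (1 - x) := by
  simp only [g10, binEnt, logb]
  field_simp
  ring

lemma g10_neg : g10 0.221 < 0 := by
  -- `1000 · log 2 · g10 0.221` is the difference of the two sides of `hcert`, which
  -- exponentiates to an inequality between integers.
  have hcert : 2431 * log 27 + 2210 * log 221 + 7790 * log 779 <
      2431 * log 4 + 663 * log 663 + 337 * log 337 + 9000 * log 1000 := by
    have hnat : 27 ^ 2431 * 221 ^ 2210 * 779 ^ 7790 <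
        4 ^ 2431 * 663 ^ 663 * 337 ^ 337 * 1000 ^ 9000 := by
      decide +kernel
    have hlog := log_lt_log (by positivity) (Nat.cast_lt (α := ℝ).mpr hnat)
    simpa only [Nat.cast_mul, Nat.cast_pow, Nat.cast_ofNat, log_mul, log_pow, ne_eq,
      OfNat.ofNat_ne_zero, not_false_eq_true, pow_eq_zero_iff, mul_eq_zero, or_self] using hlog
  have h := log_two_mul_g10 0.221
  rw [show (3 : ℝ) * 0.221 = 663 / 1000 by norm_num,
    show (1 : ℝ) - 663 / 1000 = 337 / 1000 by norm_num,
    show (1 : ℝ) - 0.221 = 779 / 1000 by norm_num, show (0.221 : ℝ) = 221 / 1000 by norm_num] at h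
  simp only [log_div, ne_eq, OfNat.ofNat_ne_zero, not_false_eq_true] at h
  have : log 2 * g10 0.221 < 0 := by linarith
  exact neg_of_mul_neg_right this (log_pos one_lt_two).le

theorem alpha2_ten_gt : g10 0.221 < 0 ∧
    ∀ α : ℝ, α ∈ Set.Ioo (0 : ℝ) (1 / 3) → g10 α = 0 → 0.221 < α := by
  refine ⟨g10_neg, fun α hα hzero ↦ ?_⟩
  by_contra! hle
  have hconv : ConvexOn ℝ (Icc 0 0.221) g10 :=
    convexOn_g10.subset (Icc_subset_Icc_right (by norm_num)) (convex_Icc _ _)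
  exact (hconv.neg_of_mem_Ioc g10_zero g10_neg ⟨hα.1, hle⟩).ne hzero
end

section
/- Suppose a graph process $(G_t)_{t \ge 1}$ satisfies: whenever the graph $G_t$ on vertex set $[t]$ is an $(\alpha, 1)$-expander and $G_t$ has no perfect matching, the number $\kappa_t$ of vertices isolated by a maximum matching satisfies $\kappa_{t+1} = \kappa_t - 1$ with probability at least $1 - (1-\alpha)^k$ and otherwise $\kappa_{t+1} = \kappa_t + 1$. Show the deterministic lemma underlying this: if $G$ is an $(\alpha,1)$-expander graph on $t$ vertices without a perfect matching, then the set $A(G)$ of vertices missed by some maximum matching has size $|A(G)| > \alpha t$. -/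
open SimpleGraph Set

variable {V : Type*} [Fintype V]

/-- `G` on `t` vertices is an `(α,1)`-expander: every `X` with `|X| ≤ α t`
satisfies `|N(X)| ≥ |X|`, where `N(X)` is the external neighborhood. -/
def IsOneExpander (G : SimpleGraph V) (α : ℝ) : Prop :=
  ∀ X : Set V, (X.ncard : ℝ) ≤ α * Fintype.card V →
    X.ncard ≤ {u | u ∉ X ∧ ∃ x ∈ X, G.Adj x u}.ncard

/-- A maximum matching: a matching covering the largest possible number of vertices. -/
def IsMaximumMatching {G : SimpleGraph V} (M : G.Subgraph) : Prop :=
  M.IsMatching ∧ ∀ M' : G.Subgraph, M'.IsMatching → M'.verts.ncard ≤ M.verts.ncard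

/-- `A G` is the set of vertices missed by at least one maximum matching of `G`. -/
def missedSet (G : SimpleGraph V) : Set V :=
  {v | ∃ M : G.Subgraph, IsMaximumMatching M ∧ v ∉ M.verts}

/-!
Encode a matching as an involution (its unmatched vertices are the fixed points) and fix a
maximum matching `f` missing two vertices `v ≠ w`. Let `B(v)` be the set of vertices `x ≠ v`
such that some maximum matching misses both `v` and `x`. An outer neighbour `u` of `B(v)` is
never `v` (that would give an augmenting edge), and `f` matches it to a vertex of `B(v) \ {w}`;
as `f` is injective, `|N(B(v))| < |B(v)|`, so the expansion property forces `|B(v)| > α t`.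

That `f u ∈ B(v)` is Gallai's lemma. Take a maximum matching `g` missing a neighbour `x` of `u`,
unmatch `u` in `f`, and swap the two matchings on the component of `u` in their union. A
connected graph has at least as many edges as vertices minus one, so such a component contains
at most two unmatched vertices in total; the exchanged matchings are then counted exactly, and
one of them (possibly after adding the edge `ux`) is a maximum matching missing `f u`.
-/

open Function

section UnionGraph

variable {α : Type*} {φ ψ : α → α}

def unionGraph (φ ψ : α → α) : SimpleGraph α :=
  SimpleGraph.fromRel fun x y => φ x = y ∨ ψ x = y

lemma Finset.card_erase_pair_add_le [DecidableEq α] (a b y : α) :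
    (({a, b} : Finset α).erase y).card + (if a = y then 1 else 0) + (if b = y then 1 else 0)
      ≤ 2 := by
  by_cases ha : a = y <;> by_cases hb : b = y <;> subst_vars <;>
    simp [*, Finset.erase_eq_of_notMem, Ne.symm, Finset.card_le_two]

namespace unionGraph

lemma mapsTo_left (C : (unionGraph φ ψ).ConnectedComponent) : MapsTo φ C.supp C.supp := by
  intro x hx
  by_cases h : x = φ x
  · rwa [← h]
  · exact C.mem_supp_of_adj_mem_supp hx (by simp [unionGraph, h])

lemma mapsTo_right (C : (unionGraph φ ψ).ConnectedComponent) : MapsTo ψ C.supp C.supp := by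
  intro x hx
  by_cases h : x = ψ x
  · rwa [← h]
  · exact C.mem_supp_of_adj_mem_supp hx (by simp [unionGraph, h])

lemma adj_iff (hφ : Involutive φ) (hψ : Involutive ψ) {x y : α} :
    (unionGraph φ ψ).Adj x y ↔ y ∈ (({φ x, ψ x} : Set α) \ {x}) := by
  simp only [unionGraph, fromRel_adj, mem_sdiff, mem_insert_iff, mem_singleton_iff]
  constructor
  · rintro ⟨hne, h⟩
    refine ⟨?_, hne.symm⟩
    rcases h with (h | h) | (h | h)
    · exact .inl h.symm
    · exact .inr h.symm
    · exact .inl (by rw [← h, hφ])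
    · exact .inr (by rw [← h, hψ])
  · rintro ⟨h, hne⟩
    exact ⟨Ne.symm hne, .inl (h.imp Eq.symm Eq.symm)⟩

/-- Summing `degree y + [φ y = y] + [ψ y = y] ≤ 2` over a component and comparing with
`#vertices ≤ #edges + 1`. -/
lemma ncard_fixedPoints_inter_supp_add_le [Finite α] (hφ : Involutive φ) (hψ : Involutive ψ)
    (C : (unionGraph φ ψ).ConnectedComponent) :
    (fixedPoints φ ∩ C.supp).ncard + (fixedPoints ψ ∩ C.supp).ncard ≤ 2 := by
  classical
  have := Fintype.ofFinite α
  have hind (χ : α → α) :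
      (fixedPoints χ ∩ C.supp).ncard = ∑ y : C, if χ y = y then 1 else 0 := by
    rw [← Finset.card_filter, ← ncard_coe_finset,
      ← ncard_image_of_injective _ Subtype.val_injective]
    congr 1
    ext x
    simp only [Finset.coe_filter, Finset.mem_univ, true_and, mem_image, mem_ofPred_eq,
      Subtype.exists, exists_and_left, exists_prop, exists_eq_right_right, mem_inter_iff,
      mem_fixedPoints, IsFixedPt]
    rfl
  have hdeg (y : C) : C.toSimpleGraph.degree y + (if φ y = y then 1 else 0) +
      (if ψ y = y then 1 else 0) ≤ 2 := by
    refine le_trans ?_ (Finset.card_erase_pair_add_le (φ y) (ψ y) y)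
    gcongr
    rw [← card_neighborFinset_eq_degree]
    refine Finset.card_le_card_of_injOn Subtype.val (fun z hz => ?_) Subtype.val_injective.injOn
    rw [Finset.mem_coe, mem_neighborFinset] at hz
    simpa [adj_iff hφ hψ] using (C.toSimpleGraph_adj y.2 z.2).1 hz
  have hconn := C.connected_toSimpleGraph.card_vert_le_card_edgeSet_add_one
  have hsum := C.toSimpleGraph.sum_degrees_eq_twice_card_edges
  have := Finset.sum_le_sum fun y (_ : y ∈ Finset.univ) => hdeg y
  simp only [Finset.sum_add_distrib, Finset.sum_const, Finset.card_univ, smul_eq_mul] at this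
  rw [Nat.card_eq_fintype_card, Nat.card_eq_fintype_card, ← edgeFinset_card] at hconn
  rw [hind, hind]
  omega

end unionGraph

end UnionGraph

section MatchingInvolution

variable {V : Type*} {G : SimpleGraph V} {f g : V → V} {x y : V}

def IsMatchingInvolution (G : SimpleGraph V) (f : V → V) : Prop :=
  Involutive f ∧ ∀ x, f x ≠ x → G.Adj x (f x)

def unmatch [DecidableEq V] (f : V → V) (x : V) : V → V :=
  update (update f x x) (f x) (f x)

def matchPair [DecidableEq V] (f : V → V) (x y : V) : V → V :=
  update (update f x y) y x

lemma isMatchingInvolution_id : IsMatchingInvolution G id :=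
  ⟨fun _ => rfl, fun _ h => absurd rfl h⟩

section Update

variable [DecidableEq V]

lemma unmatch_apply_of_ne (h1 : y ≠ x) (h2 : y ≠ f x) : unmatch f x y = f y := by
  simp [unmatch, h1, h2]

lemma unmatch_apply_of_eq (h : y = x ∨ y = f x) : unmatch f x y = y := by
  rcases h with rfl | rfl <;> simp [unmatch, update_apply, eq_comm]

lemma fixedPoints_unmatch :
    fixedPoints (unmatch f x) = insert x (insert (f x) (fixedPoints f)) := by
  ext y
  by_cases h : y = x ∨ y = f x
  · simp only [mem_fixedPoints, IsFixedPt, unmatch_apply_of_eq h, mem_insert_iff, true_iff]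
    tauto
  push Not at h
  simp [IsFixedPt, unmatch_apply_of_ne h.1 h.2, h.1, h.2]

lemma IsMatchingInvolution.unmatch (hf : IsMatchingInvolution G f) (x : V) :
    IsMatchingInvolution G (unmatch f x) := by
  refine ⟨fun y => ?_, fun y hy => ?_⟩
  · by_cases h : y = x ∨ y = f x
    · rw [unmatch_apply_of_eq h, unmatch_apply_of_eq h]
    push Not at h
    have h1 : f y ≠ x := fun e => h.2 (by rw [← e, hf.1 y])
    have h2 : f y ≠ f x := fun e => h.1 (hf.1.injective e)
    rw [unmatch_apply_of_ne h.1 h.2, unmatch_apply_of_ne h1 h2, hf.1 y]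
  · by_cases h : y = x ∨ y = f x
    · exact absurd (unmatch_apply_of_eq h) hy
    push Not at h
    rw [unmatch_apply_of_ne h.1 h.2] at hy ⊢
    exact hf.2 y hy

lemma ncard_fixedPoints_unmatch [Finite V] (hf : Involutive f) (hx : f x ≠ x) :
    (fixedPoints (unmatch f x)).ncard = (fixedPoints f).ncard + 2 := by
  have hfx : f x ∉ fixedPoints f := fun h => hx (h.eq.symm.trans (hf x))
  rw [fixedPoints_unmatch, ncard_insert_of_notMem, ncard_insert_of_notMem hfx]
  rintro (h | h)
  · exact hx h.symm
  · exact hx h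

lemma matchPair_apply_of_ne {z : V} (h1 : z ≠ x) (h2 : z ≠ y) : matchPair f x y z = f z := by
  simp [matchPair, h1, h2]

lemma fixedPoints_matchPair (hxy : x ≠ y) :
    fixedPoints (matchPair f x y) = fixedPoints f \ {x, y} := by
  ext z
  by_cases h1 : z = x
  · subst h1; simp [matchPair, IsFixedPt, hxy, Ne.symm hxy]
  by_cases h2 : z = y
  · subst h2; simp [matchPair, IsFixedPt, hxy]
  simp [IsFixedPt, matchPair_apply_of_ne h1 h2, h1, h2]

lemma IsMatchingInvolution.matchPair (hf : IsMatchingInvolution G f) (hx : f x = x)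
    (hy : f y = y) (hxy : G.Adj x y) : IsMatchingInvolution G (matchPair f x y) := by
  have hne := hxy.ne
  refine ⟨fun z => ?_, fun z hz => ?_⟩
  · by_cases h1 : z = x
    · subst h1; simp [_root_.matchPair, hne]
    by_cases h2 : z = y
    · subst h2; simp [_root_.matchPair, hne]
    have h1' : f z ≠ x := fun e => h1 (by rw [← hf.1 z, e, hx])
    have h2' : f z ≠ y := fun e => h2 (by rw [← hf.1 z, e, hy])
    rw [matchPair_apply_of_ne h1 h2, matchPair_apply_of_ne h1' h2', hf.1 z]
  · by_cases h1 : z = x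
    · subst h1; simpa [_root_.matchPair, hne] using hxy
    by_cases h2 : z = y
    · subst h2; simpa [_root_.matchPair, hne] using hxy.symm
    rw [matchPair_apply_of_ne h1 h2] at hz ⊢
    exact hf.2 z hz

lemma ncard_fixedPoints_matchPair [Finite V] (hx : f x = x) (hy : f y = y) (hxy : x ≠ y) :
    (fixedPoints (matchPair f x y)).ncard + 2 = (fixedPoints f).ncard := by
  rw [fixedPoints_matchPair hxy, ← ncard_pair hxy, ncard_sdiff_add_ncard_of_subset]
  rintro z (rfl | rfl) <;> assumption

end Update

section Piecewise

variable {s : Set V} [DecidablePred (· ∈ s)]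

lemma IsMatchingInvolution.piecewise (hf : IsMatchingInvolution G f)
    (hg : IsMatchingInvolution G g) (hfs : MapsTo f s s) (hgs : MapsTo g s s) :
    IsMatchingInvolution G (s.piecewise f g) := by
  have hgsc : MapsTo g sᶜ sᶜ := fun x hx hgx => hx (hg.1 x ▸ hgs hgx)
  refine ⟨fun x => ?_, fun x hx => ?_⟩
  · by_cases h : x ∈ s
    · rw [piecewise_eq_of_mem _ _ _ h, piecewise_eq_of_mem _ _ _ (hfs h), hf.1]
    · rw [piecewise_eq_of_notMem _ _ _ h, piecewise_eq_of_notMem _ _ _ (hgsc h), hg.1]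
  · by_cases h : x ∈ s
    · rw [piecewise_eq_of_mem _ _ _ h] at hx ⊢; exact hf.2 x hx
    · rw [piecewise_eq_of_notMem _ _ _ h] at hx ⊢; exact hg.2 x hx

lemma fixedPoints_piecewise :
    fixedPoints (s.piecewise f g) = fixedPoints f ∩ s ∪ fixedPoints g \ s := by
  ext x
  by_cases h : x ∈ s <;> simp [IsFixedPt, h]

lemma ncard_fixedPoints_piecewise_add [Finite V] :
    (fixedPoints (s.piecewise f g)).ncard + (fixedPoints g ∩ s).ncard =
      (fixedPoints g).ncard + (fixedPoints f ∩ s).ncard := by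
  rw [fixedPoints_piecewise, ncard_union_eq (disjoint_sdiff_right.mono_left inter_subset_right),
    ← ncard_inter_add_ncard_sdiff_eq_ncard (fixedPoints g) s]
  omega

end Piecewise

end MatchingInvolution

section Maximum

variable {V : Type*} {G : SimpleGraph V} {f g : V → V} {x y u : V}

def IsMaximumMatchingInvolution (G : SimpleGraph V) (f : V → V) : Prop :=
  IsMatchingInvolution G f ∧
    ∀ g, IsMatchingInvolution G g → (fixedPoints f).ncard ≤ (fixedPoints g).ncard

lemma exists_isMaximumMatchingInvolution [Finite V] (G : SimpleGraph V) :
    ∃ f, IsMaximumMatchingInvolution G f := by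
  obtain ⟨f, hf, hmin⟩ := exists_min_image {f | IsMatchingInvolution G f}
    (fun f => (fixedPoints f).ncard) (toFinite _) ⟨id, isMatchingInvolution_id⟩
  exact ⟨f, hf, hmin⟩

lemma IsMaximumMatchingInvolution.of_ncard_le (hf : IsMaximumMatchingInvolution G f)
    (hg : IsMatchingInvolution G g) (hle : (fixedPoints g).ncard ≤ (fixedPoints f).ncard) :
    IsMaximumMatchingInvolution G g :=
  ⟨hg, fun h hh => hle.trans (hf.2 h hh)⟩

variable [Finite V]

lemma IsMaximumMatchingInvolution.not_adj (hf : IsMaximumMatchingInvolution G f)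
    (hx : f x = x) (hy : f y = y) : ¬ G.Adj x y := fun hxy => by
  classical
  have := hf.2 _ (hf.1.matchPair hx hy hxy)
  have := ncard_fixedPoints_matchPair hx hy hxy.ne
  omega

theorem IsMaximumMatchingInvolution.exists_fixing_apply (hf : IsMaximumMatchingInvolution G f)
    (hg : IsMaximumMatchingInvolution G g) (hgx : g x = x) (hxu : G.Adj x u)
    (hu : ∀ h, IsMaximumMatchingInvolution G h → h u ≠ u) :
    ∃ h, IsMaximumMatchingInvolution G h ∧ h (f u) = f u := by
  classical
  by_cases hgp : g (f u) = f u
  · exact ⟨g, hg, hgp⟩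
  have hxp : x ≠ f u := fun h => hgp (h ▸ hgx)
  set f' := unmatch f u
  have hf' : IsMatchingInvolution G f' := hf.1.unmatch u
  have hcard : (fixedPoints f').ncard = (fixedPoints f).ncard + 2 :=
    ncard_fixedPoints_unmatch hf.1.1 (hu f hf)
  set C := (unionGraph f' g).connectedComponentMk u
  set O := C.supp
  have hbound : (fixedPoints f' ∩ O).ncard + (fixedPoints g ∩ O).ncard ≤ 2 :=
    unionGraph.ncard_fixedPoints_inter_supp_add_le hf'.1 hg.1.1 C
  have hu' : u ∈ fixedPoints f' ∩ O := ⟨by simp [f', fixedPoints_unmatch], rfl⟩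
  have hh₁ : IsMatchingInvolution G (O.piecewise g f') :=
    hg.1.piecewise hf' (unionGraph.mapsTo_right C) (unionGraph.mapsTo_left C)
  have hh₂ : IsMatchingInvolution G (O.piecewise f' g) :=
    hf'.piecewise hg.1 (unionGraph.mapsTo_left C) (unionGraph.mapsTo_right C)
  have e₁ := ncard_fixedPoints_piecewise_add (s := O) (f := g) (g := f')
  have e₂ := ncard_fixedPoints_piecewise_add (s := O) (f := f') (g := g)
  have hgf := hg.2 f hf.1
  have h₂u : O.piecewise f' g u = u := by rw [piecewise_eq_of_mem _ _ _ hu'.2]; exact hu'.1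
  rcases (fixedPoints g ∩ O).eq_empty_or_nonempty with hb | hb
  · have hxO : x ∉ O := fun h => hb.subset ⟨hgx, h⟩
    have hb0 : (fixedPoints g ∩ O).ncard = 0 := by rw [hb, ncard_empty]
    have h₂x : O.piecewise f' g x = x := by rw [piecewise_eq_of_notMem _ _ _ hxO, hgx]
    have hh₃ := hh₂.matchPair h₂u h₂x hxu.symm
    have e₃ := ncard_fixedPoints_matchPair h₂u h₂x hxu.ne'
    have := hf.2 _ hh₃
    by_cases hpO : f u ∈ O
    · refine ⟨_, hf.of_ncard_le hh₃ (by omega), ?_⟩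
      rw [matchPair_apply_of_ne (hu f hf) hxp.symm, piecewise_eq_of_mem _ _ _ hpO]
      simp [f', unmatch]
    · refine ⟨_, hf.of_ncard_le hh₁ (by omega), ?_⟩
      rw [piecewise_eq_of_notMem _ _ _ hpO]
      simp [f', unmatch]
  · have := (ncard_pos).2 hb
    exact absurd h₂u (hu _ (hf.of_ncard_le hh₂ (by omega)))

end Maximum

section Subgraph

variable {V : Type*} {G : SimpleGraph V} {f : V → V}

lemma SimpleGraph.Subgraph.IsMatching.exists_isMatchingInvolution {M : G.Subgraph}
    (hM : M.IsMatching) : ∃ f, IsMatchingInvolution G f ∧ fixedPoints f = M.vertsᶜ := by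
  classical
  let f x := if h : x ∈ M.verts then (hM h).choose else x
  have hadj : ∀ x ∈ M.verts, M.Adj x (f x) := fun x hx => by
    simpa only [f, dif_pos hx] using (hM hx).choose_spec.1
  have hpartner : ∀ x y, M.Adj x y → f x = y := fun x y h =>
    (hM (M.edge_vert h)).unique (hadj x (M.edge_vert h)) h
  have hfix : ∀ x, f x = x ↔ x ∉ M.verts := fun x => by
    by_cases hx : x ∈ M.verts
    · simpa [hx] using (hadj x hx).ne.symm
    · simp [f, hx]
  refine ⟨f, ⟨fun x => ?_, fun x hx => M.adj_sub (hadj x ?_)⟩, ?_⟩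
  · by_cases hx : x ∈ M.verts
    · exact hpartner _ _ (hadj x hx).symm
    · rw [(hfix x).2 hx, (hfix x).2 hx]
  · exact not_not.1 (mt (hfix x).2 hx)
  · ext x
    exact hfix x

lemma IsMatchingInvolution.exists_isMatching (hf : IsMatchingInvolution G f) :
    ∃ M : G.Subgraph, M.IsMatching ∧ M.verts = (fixedPoints f)ᶜ := by
  refine ⟨⟨(fixedPoints f)ᶜ, fun x y => x ≠ y ∧ f x = y, ?_, ?_, ?_⟩, ?_, rfl⟩
  · rintro x y ⟨hne, rfl⟩
    exact hf.2 x hne.symm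
  · rintro x y ⟨hne, rfl⟩
    exact hne.symm
  · constructor
    rintro x y ⟨hne, rfl⟩
    exact ⟨hne.symm, hf.1 x⟩
  · intro x hx
    exact ⟨f x, ⟨Ne.symm hx, rfl⟩, fun y hy => hy.2.symm⟩

end Subgraph

section MissedSet

variable {G : SimpleGraph V} {f : V → V} {v w x u : V}

lemma mem_missedSet_iff :
    v ∈ missedSet G ↔ ∃ f, IsMaximumMatchingInvolution G f ∧ f v = v := by
  constructor
  · rintro ⟨M, ⟨hM, hmax⟩, hv⟩
    obtain ⟨f, hf, hfM⟩ := hM.exists_isMatchingInvolution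
    refine ⟨f, ⟨hf, fun g hg => ?_⟩, (hfM ▸ hv : v ∈ fixedPoints f)⟩
    obtain ⟨M', hM', hgM'⟩ := hg.exists_isMatching
    have := hmax M' hM'
    have := ncard_add_ncard_compl M.verts
    have := ncard_add_ncard_compl M'.verts
    rw [hfM, ← compl_compl (fixedPoints g), ← hgM']
    omega
  · rintro ⟨f, hf, hv⟩
    obtain ⟨M, hM, hfM⟩ := hf.1.exists_isMatching
    refine ⟨M, ⟨hM, fun M' hM' => ?_⟩, by rw [hfM, mem_compl_iff, not_not]; exact hv⟩
    obtain ⟨g, hg, hgM'⟩ := hM'.exists_isMatchingInvolution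
    have := hf.2 g hg
    have := ncard_add_ncard_compl M.verts
    have := ncard_add_ncard_compl M'.verts
    rw [hgM', hfM, compl_compl] at *
    omega

lemma IsMaximumMatchingInvolution.apply_mem_missedSet (hf : IsMaximumMatchingInvolution G f)
    (hx : x ∈ missedSet G) (hu : u ∉ missedSet G) (hxu : G.Adj x u) : f u ∈ missedSet G := by
  obtain ⟨g, hg, hgx⟩ := mem_missedSet_iff.1 hx
  exact mem_missedSet_iff.2 <| hf.exists_fixing_apply hg hgx hxu fun h hh hhu =>
    hu (mem_missedSet_iff.2 ⟨h, hh, hhu⟩)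

end MissedSet

section DeleteIncidenceSet

variable {V : Type*} {G : SimpleGraph V} {f h : V → V} {v : V}

lemma isMatchingInvolution_deleteIncidenceSet_iff :
    IsMatchingInvolution (G.deleteIncidenceSet v) f ↔ IsMatchingInvolution G f ∧ f v = v := by
  refine ⟨fun hf => ⟨⟨hf.1, fun x hx => (deleteIncidenceSet_adj.1 (hf.2 x hx)).1⟩, ?_⟩,
    fun ⟨hf, hv⟩ => ⟨hf.1, fun x hx => deleteIncidenceSet_adj.2 ⟨hf.2 x hx, ?_, ?_⟩⟩⟩
  · by_contra hv
    exact (deleteIncidenceSet_adj.1 (hf.2 v hv)).2.1 rfl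
  · rintro rfl
    exact hx hv
  · intro hxv
    have hxv' : x = v := by rw [← hf.1 x, hxv, hv]
    exact hx (hxv.trans hxv'.symm)

lemma IsMaximumMatchingInvolution.deleteIncidenceSet_iff [Finite V]
    (hf : IsMaximumMatchingInvolution G f) (hv : f v = v) :
    IsMaximumMatchingInvolution (G.deleteIncidenceSet v) h ↔
      IsMaximumMatchingInvolution G h ∧ h v = v := by
  constructor
  · intro hh
    obtain ⟨hhG, hhv⟩ := isMatchingInvolution_deleteIncidenceSet_iff.1 hh.1
    have hfH := isMatchingInvolution_deleteIncidenceSet_iff.2 ⟨hf.1, hv⟩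
    exact ⟨hf.of_ncard_le hhG (hh.2 f hfH), hhv⟩
  · rintro ⟨hh, hhv⟩
    exact ⟨isMatchingInvolution_deleteIncidenceSet_iff.2 ⟨hh.1, hhv⟩,
      fun g hg => hh.2 g (isMatchingInvolution_deleteIncidenceSet_iff.1 hg).1⟩

end DeleteIncidenceSet

/-- The set `B(v)` of the paper: when some maximum matching of `G` misses `v`, the maximum
matchings of `G.deleteIncidenceSet v` are exactly the maximum matchings of `G` missing `v`. -/
def missedWith (G : SimpleGraph V) (v : V) : Set V :=
  missedSet (G.deleteIncidenceSet v) \ {v}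

section MissedWith

variable {G : SimpleGraph V} {f : V → V} {v w : V}

lemma missedWith_subset_missedSet (hf : IsMaximumMatchingInvolution G f) (hv : f v = v) :
    missedWith G v ⊆ missedSet G := fun x ⟨hx, _⟩ => by
  obtain ⟨h, hh, hhx⟩ := mem_missedSet_iff.1 hx
  exact mem_missedSet_iff.2 ⟨h, ((hf.deleteIncidenceSet_iff hv).1 hh).1, hhx⟩

lemma ncard_neighbors_missedWith_lt (hf : IsMaximumMatchingInvolution G f) (hv : f v = v)
    (hw : f w = w) (hvw : v ≠ w) :
    {u | u ∉ missedWith G v ∧ ∃ x ∈ missedWith G v, G.Adj x u}.ncard <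
      (missedWith G v).ncard := by
  have hfH := (hf.deleteIncidenceSet_iff hv).2 ⟨hf, hv⟩
  have hwB : w ∈ missedWith G v := ⟨mem_missedSet_iff.2 ⟨f, hfH, hw⟩, hvw.symm⟩
  refine (ncard_le_ncard_of_injOn f (fun u hu => ?_) hf.1.1.injective.injOn).trans_lt
    (ncard_sdiff_singleton_lt_of_mem hwB)
  obtain ⟨huB, x, ⟨hx, hxv⟩, hxu⟩ := hu
  have huv : u ≠ v := by
    rintro rfl
    obtain ⟨h, hh, hhx⟩ := mem_missedSet_iff.1 hx
    obtain ⟨hhG, hhv⟩ := (hf.deleteIncidenceSet_iff hv).1 hh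
    exact hhG.not_adj hhx hhv hxu
  have hfu := hfH.apply_mem_missedSet hx (fun h => huB ⟨h, huv⟩)
    (deleteIncidenceSet_adj.2 ⟨hxu, hxv, huv⟩)
  refine ⟨⟨hfu, fun h => huv ?_⟩, fun h => huB ?_⟩
  · rw [← hf.1.1 u, h, hv]
  · rwa [← hf.1.1 u, h, hw]

end MissedWith

theorem missedSet_large_of_expander_general (t : ℕ) (G : SimpleGraph (Fin t)) (α : ℝ)
    (hexp : IsOneExpander G α)
    (hnpm : ¬ ∃ M : G.Subgraph, M.IsMatching ∧ (M.vertsᶜ).ncard ≤ 1) :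
    α * t < (missedSet G).ncard := by
  obtain ⟨f, hf⟩ := exists_isMaximumMatchingInvolution G
  obtain ⟨v, w, hv, hw, hvw⟩ :
      ∃ v w, v ∈ fixedPoints f ∧ w ∈ fixedPoints f ∧ v ≠ w := by
    obtain ⟨M, hM, hMf⟩ := hf.1.exists_isMatching
    refine (one_lt_ncard_iff).1 (not_le.1 fun h => hnpm ⟨M, hM, ?_⟩)
    rwa [hMf, compl_compl]
  have hB : α * t < (missedWith G v).ncard := by
    by_contra! hle
    refine (ncard_neighbors_missedWith_lt hf hv hw hvw).not_ge (hexp _ ?_)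
    simpa using hle
  calc α * t < (missedWith G v).ncard := hB
    _ ≤ (missedSet G).ncard := by
      exact_mod_cast ncard_le_ncard (missedWith_subset_missedSet hf hv)

/-- A "perfect matching" in the sense of the paper: a matching isolating at most
one vertex.  If an `(α,1)`-expander graph on `t` vertices has no such matching,
then the set of vertices missed by some maximum matching has size `> α t`. -/
theorem missedSet_large_of_expander (t : ℕ) (G : SimpleGraph (Fin t)) (α : ℝ)
    (hα : 0 < α)
    (hexp : IsOneExpander G α)
    (hnpm : ¬ ∃ M : G.Subgraph, M.IsMatching ∧ (M.vertsᶜ).ncard ≤ 1) :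
    α * t < (missedSet G).ncard :=
  missedSet_large_of_expander_general t G α hexp hnpm
end
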